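/- ELPAω_lp proves the sequent ⊢ lp^⊥(x), lp^⊥(y), (∃^lp V¹ ∀u⁰ A_at(x, y, u, Vu))^⊥, ∃^lp z¹ (wit(x·y, z))^L, where A_at(x,y,u,v) is the quantifier-free formula expressing that x(⟨u⟩ * ȳv) ≠₀ 0 and x(⟨u⟩ * ȳw) =₀ 0 for all w < v. -/

import Mathlib

namespace WR

/-- Finite types of `EPAω`: `o` is the type of natural numbers, `arr σ τ` is `σ → τ`. -/
inductive Ty : Type
  | o : Ty
  | arr : Ty → Ty → Ty
  deriving DecidableEq

notation "𝕆" => Ty.o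
infixr:60 " ⤳ " => Ty.arr

/-- The type `1` of number sequences. -/
abbrev Ty1 : Ty := 𝕆 ⤳ 𝕆
/-- The type of binary number functions. -/
abbrev Ty2 : Ty := 𝕆 ⤳ 𝕆 ⤳ 𝕆

/-- Hereditarily computable types: `comp 0 = 1`, `comp (ρ ⤳ τ) = comp ρ ⤳ comp τ`. -/
def Ty.comp : Ty → Ty
  | .o => Ty1
  | .arr ρ τ => .arr ρ.comp τ.comp

/-- Terms of `EPAω`: typed variables, zero, successor, projectors (K), combinators (S),
recursors (R), λ-abstraction and application. -/
inductive Tm : Ty → Type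
  | var (n : ℕ) (τ : Ty) : Tm τ
  | zero : Tm 𝕆
  | succ : Tm (𝕆 ⤳ 𝕆)
  | K (σ τ : Ty) : Tm (σ ⤳ τ ⤳ σ)
  | S (δ ρ τ : Ty) : Tm ((δ ⤳ ρ ⤳ τ) ⤳ (δ ⤳ ρ) ⤳ δ ⤳ τ)
  | R (τ : Ty) : Tm (τ ⤳ (𝕆 ⤳ τ ⤳ τ) ⤳ 𝕆 ⤳ τ)
  | lam {τ : Ty} (n : ℕ) (σ : Ty) : Tm τ → Tm (σ ⤳ τ)
  | app {σ τ : Ty} : Tm (σ ⤳ τ) → Tm σ → Tm τ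

/-- Free variables of a term (as (index, type) pairs). -/
def Tm.fvars : {τ : Ty} → Tm τ → Set (ℕ × Ty)
  | _, .var m ρ => {(m, ρ)}
  | _, .zero => ∅
  | _, .succ => ∅
  | _, .K _ _ => ∅
  | _, .S _ _ _ => ∅
  | _, .R _ => ∅
  | _, .lam m ρ t => Tm.fvars t \ {(m, ρ)}
  | _, .app f a => Tm.fvars f ∪ Tm.fvars a

/-- A term is closed if it has no free variables. -/
def Tm.Closed {τ : Ty} (t : Tm τ) : Prop := t.fvars = ∅

/-- A strict upper bound for all (free or bound) variable indices occurring in a term. -/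
def Tm.maxVar : {τ : Ty} → Tm τ → ℕ
  | _, .var m _ => m + 1
  | _, .zero => 0
  | _, .succ => 0
  | _, .K _ _ => 0
  | _, .S _ _ _ => 0
  | _, .R _ => 0
  | _, .lam m _ t => max (m + 1) (Tm.maxVar t)
  | _, .app f a => max (Tm.maxVar f) (Tm.maxVar a)

/-- Substitution of the term `s` for the variable `(n, σ)` in a term (naive). -/
def Tm.subst : {τ : Ty} → Tm τ → ℕ → {σ : Ty} → Tm σ → Tm τ
  | _, .var m ρ, n, σ, s =>
      if h : m = n ∧ ρ = σ then (by rw [h.2]; exact s) else .var m ρ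
  | _, .zero, _, _, _ => .zero
  | _, .succ, _, _, _ => .succ
  | _, .K σ' τ', _, _, _ => .K σ' τ'
  | _, .S δ ρ τ', _, _, _ => .S δ ρ τ'
  | _, .R τ', _, _, _ => .R τ'
  | _, .lam m ρ t, n, σ, s =>
      if m = n ∧ ρ = σ then .lam m ρ t else .lam m ρ (Tm.subst t n s)
  | _, .app f a, n, _, s => .app (Tm.subst f n s) (Tm.subst a n s)

/-- `s` is free for the variable `(n, σ)` in the term `t`:
no free occurrence of the variable lies in the scope of a binder capturing a
free variable of `s`. -/
def Tm.FreeForIn {σ : Ty} (s : Tm σ) (n : ℕ) : {τ : Ty} → Tm τ → Prop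
  | _, .lam m ρ t =>
      ((n, σ) ∉ Tm.fvars t) ∨ (m = n ∧ ρ = σ) ∨
        (((m, ρ) ∉ s.fvars) ∧ Tm.FreeForIn s n t)
  | _, .app f a => Tm.FreeForIn s n f ∧ Tm.FreeForIn s n a
  | _, _ => True

/-- Variable of type `0`. -/
abbrev v0 (n : ℕ) : Tm 𝕆 := .var n 𝕆
/-- The numeral `1`. -/
def tm1 : Tm 𝕆 := Tm.app Tm.succ Tm.zero

/-- Recursion at type `0`. -/
def recO (y : Tm 𝕆) (z : Tm (𝕆 ⤳ 𝕆 ⤳ 𝕆)) (n : Tm 𝕆) : Tm 𝕆 :=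
  (((Tm.R 𝕆).app y).app z).app n

/-- Addition: `addT a b = a + b`. -/
def addT : Tm Ty2 :=
  .lam 0 𝕆 (.lam 1 𝕆 (recO (v0 0) (.lam 2 𝕆 (.lam 3 𝕆 (Tm.succ.app (v0 3)))) (v0 1)))

/-- Predecessor (with `pred 0 = 0`). -/
def predT : Tm Ty1 :=
  .lam 0 𝕆 (recO .zero (.lam 1 𝕆 (.lam 2 𝕆 (v0 1))) (v0 0))

/-- `condT c a b` equals `a` if `c = 0` and `b` otherwise. -/
def condT : Tm (𝕆 ⤳ 𝕆 ⤳ 𝕆 ⤳ 𝕆) :=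
  .lam 0 𝕆 (.lam 1 𝕆 (.lam 2 𝕆 (recO (v0 1) (.lam 3 𝕆 (.lam 4 𝕆 (v0 2))) (v0 0))))

/-- Cut-off subtraction `a ∸ b`. -/
def monusT : Tm Ty2 :=
  .lam 0 𝕆 (.lam 1 𝕆 (recO (v0 0) (.lam 2 𝕆 (.lam 3 𝕆 (predT.app (v0 3)))) (v0 1)))

/-- Triangular numbers `tri n = 0 + 1 + ⋯ + n`. -/
def triT : Tm Ty1 :=
  .lam 0 𝕆 (recO .zero
    (.lam 1 𝕆 (.lam 2 𝕆 ((addT.app (v0 2)).app (Tm.succ.app (v0 1))))) (v0 0))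

/-- Cantor pairing `j x y = tri (x + y) + y` (injective). -/
def pairT : Tm Ty2 :=
  .lam 0 𝕆 (.lam 1 𝕆
    ((addT.app (triT.app ((addT.app (v0 0)).app (v0 1)))).app (v0 1)))

/-- Signum: `sg 0 = 0`, `sg (n+1) = 1`. -/
def sgT : Tm Ty1 :=
  .lam 0 𝕆 (recO .zero (.lam 1 𝕆 (.lam 2 𝕆 tm1)) (v0 0))

/-- Pointwise pairing of two sequences: `pwPairT u y = λk. j (u k) (y k)`. -/
def pwPairT : Tm (Ty1 ⤳ Ty1 ⤳ Ty1) :=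
  .lam 0 Ty1 (.lam 1 Ty1 (.lam 2 𝕆
    ((pairT.app ((Tm.var 0 Ty1).app (v0 2))).app ((Tm.var 1 Ty1).app (v0 2)))))

/-- `seqCodeT z u v` is the code of the finite sequence `⟨u⟩ * z̄v = (u, z 0, …, z (v-1))`
(coded by iterated injective pairing). -/
def seqCodeT : Tm (Ty1 ⤳ 𝕆 ⤳ 𝕆 ⤳ 𝕆) :=
  .lam 0 Ty1 (.lam 1 𝕆 (.lam 2 𝕆
    (recO (Tm.succ.app ((pairT.app (v0 1)).app .zero))
      (.lam 3 𝕆 (.lam 4 𝕆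
        (Tm.succ.app ((pairT.app ((Tm.var 0 Ty1).app (v0 3))).app (v0 4)))))
      (v0 2))))

/-- `initCodeT z v` is the code of the finite sequence `z̄v = (z 0, …, z (v-1))`. -/
def initCodeT : Tm (Ty1 ⤳ 𝕆 ⤳ 𝕆) :=
  .lam 0 Ty1 (.lam 1 𝕆
    (recO .zero
      (.lam 2 𝕆 (.lam 3 𝕆
        (Tm.succ.app ((pairT.app ((Tm.var 0 Ty1).app (v0 2))).app (v0 3)))))
      (v0 1)))

/-- Formulas of (classical) `EPAω`. The only atomic predicate is equality at type `0`.-/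
inductive CForm : Type
  | eq : Tm 𝕆 → Tm 𝕆 → CForm
  | not : CForm → CForm
  | and : CForm → CForm → CForm
  | or : CForm → CForm → CForm
  | imp : CForm → CForm → CForm
  | all : ℕ → Ty → CForm → CForm
  | ex : ℕ → Ty → CForm → CForm

/-- Free variables of a classical formula. -/
def CForm.fvars : CForm → Set (ℕ × Ty)
  | .eq s t => s.fvars ∪ t.fvars
  | .not A => A.fvars
  | .and A B => A.fvars ∪ B.fvars
  | .or A B => A.fvars ∪ B.fvars
  | .imp A B => A.fvars ∪ B.fvars
  | .all n τ A => A.fvars \ {(n, τ)}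
  | .ex n τ A => A.fvars \ {(n, τ)}

/-- Substitution of a term for a variable in a classical formula (naive). -/
def CForm.substTm (A : CForm) (n : ℕ) {σ : Ty} (s : Tm σ) : CForm :=
  match A with
  | .eq a b => .eq (a.subst n s) (b.subst n s)
  | .not A => .not (A.substTm n s)
  | .and A B => .and (A.substTm n s) (B.substTm n s)
  | .or A B => .or (A.substTm n s) (B.substTm n s)
  | .imp A B => .imp (A.substTm n s) (B.substTm n s)
  | .all m τ A => if m = n ∧ τ = σ then .all m τ A else .all m τ (A.substTm n s)
  | .ex m τ A => if m = n ∧ τ = σ then .ex m τ A else .ex m τ (A.substTm n s)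

/-- `s` is free for the variable `(n, σ)` in the classical formula `A`. -/
def CForm.FreeFor {σ : Ty} (s : Tm σ) (n : ℕ) : CForm → Prop
  | .eq _ _ => True
  | .not A => CForm.FreeFor s n A
  | .and A B => CForm.FreeFor s n A ∧ CForm.FreeFor s n B
  | .or A B => CForm.FreeFor s n A ∧ CForm.FreeFor s n B
  | .imp A B => CForm.FreeFor s n A ∧ CForm.FreeFor s n B
  | .all m τ A =>
      ((n, σ) ∉ (A.fvars \ {(m, τ)})) ∨ (((m, τ) ∉ s.fvars) ∧ CForm.FreeFor s n A)
  | .ex m τ A =>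
      ((n, σ) ∉ (A.fvars \ {(m, τ)})) ∨ (((m, τ) ∉ s.fvars) ∧ CForm.FreeFor s n A)

/-- Quantifier-free classical formulas. -/
def CForm.qf : CForm → Prop
  | .eq _ _ => True
  | .not A => A.qf
  | .and A B => A.qf ∧ B.qf
  | .or A B => A.qf ∧ B.qf
  | .imp A B => A.qf ∧ B.qf
  | .all _ _ _ => False
  | .ex _ _ _ => False

/-- Higher-type equality as an abbreviation: `s =_{ρ ⤳ τ} t :≡ ∀x (s x =_τ t x)`. -/
def eqAt : (τ : Ty) → Tm τ → Tm τ → CForm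
  | 𝕆, s, t => .eq s t
  | .arr σ τ, s, t =>
      let n := max s.maxVar t.maxVar
      .all n σ (eqAt τ (s.app (.var n σ)) (t.app (.var n σ)))

/-- `s ≠₀ t`. -/
def neqF (s t : Tm 𝕆) : CForm := .not (.eq s t)
/-- Classical bi-implication. -/
def iffC (A B : CForm) : CForm := (A.imp B).and (B.imp A)

/-- `s <₀ t` expressed as `∃k (s + (k+1) = t)`. -/
def ltF (s t : Tm 𝕆) : CForm :=
  let k := max s.maxVar t.maxVar
  .ex k 𝕆 (.eq ((addT.app s).app (Tm.app Tm.succ (v0 k))) t)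

/-- `s ≤₀ t` expressed as `∃k (s + k = t)`. -/
def leF (s t : Tm 𝕆) : CForm :=
  let k := max s.maxVar t.maxVar
  .ex k 𝕆 (.eq ((addT.app s).app (v0 k)) t)

/-- The axioms of `EPAω`: equality axioms, successor axioms, defining equations for the
projectors, combinators, recursors and λ-abstraction, extensionality and full induction. -/
inductive EPAAx : CForm → Prop
  | eqRefl (n : ℕ) : EPAAx (.eq (v0 n) (v0 n))
  | eqSym (n m : ℕ) :
      EPAAx ((CForm.eq (v0 n) (v0 m)).imp (.eq (v0 m) (v0 n)))
  | eqTrans (n m k : ℕ) :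
      EPAAx (((CForm.eq (v0 n) (v0 m)).and (.eq (v0 m) (v0 k))).imp (.eq (v0 n) (v0 k)))
  | eqSub (A : CForm) (z x y : ℕ)
      (hx : CForm.FreeFor (v0 x) z A) (hy : CForm.FreeFor (v0 y) z A) :
      EPAAx ((CForm.eq (v0 x) (v0 y)).imp
        ((A.substTm z (v0 x)).imp (A.substTm z (v0 y))))
  | succInj (n m : ℕ) :
      EPAAx ((CForm.eq (Tm.app Tm.succ (v0 n)) (Tm.app Tm.succ (v0 m))).imp
        (.eq (v0 n) (v0 m)))
  | succNeZero (n : ℕ) : EPAAx (.not (.eq (Tm.app Tm.succ (v0 n)) .zero))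
  | axK {σ τ : Ty} (a : Tm σ) (b : Tm τ) :
      EPAAx (eqAt σ (((Tm.K σ τ).app a).app b) a)
  | axS {δ ρ τ : Ty} (x : Tm (δ ⤳ ρ ⤳ τ)) (y : Tm (δ ⤳ ρ)) (z : Tm δ) :
      EPAAx (eqAt τ ((((Tm.S δ ρ τ).app x).app y).app z) ((x.app z).app (y.app z)))
  | axR0 {τ : Ty} (y : Tm τ) (z : Tm (𝕆 ⤳ τ ⤳ τ)) :
      EPAAx (eqAt τ ((((Tm.R τ).app y).app z).app .zero) y)
  | axRS {τ : Ty} (y : Tm τ) (z : Tm (𝕆 ⤳ τ ⤳ τ)) (n : Tm 𝕆) :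
      EPAAx (eqAt τ ((((Tm.R τ).app y).app z).app (Tm.app Tm.succ n))
        ((z.app n).app ((((Tm.R τ).app y).app z).app n)))
  | axBeta {σ τ : Ty} (n : ℕ) (t : Tm τ) (s : Tm σ) (h : s.FreeForIn n t) :
      EPAAx (eqAt τ ((Tm.lam n σ t).app s) (t.subst n s))
  | axExt {ρ τ : Ty} (nz nx ny : ℕ) :
      EPAAx ((eqAt ρ (.var nx ρ) (.var ny ρ)).imp
        (eqAt τ ((Tm.var nz (ρ ⤳ τ)).app (.var nx ρ)) ((Tm.var nz (ρ ⤳ τ)).app (.var ny ρ))))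
  | axInd (A : CForm) (n : ℕ)
      (h : CForm.FreeFor (Tm.app Tm.succ (v0 n)) n A) :
      EPAAx (((A.substTm n (Tm.zero)).and
        (.all n 𝕆 (A.imp (A.substTm n (Tm.app Tm.succ (v0 n)))))).imp (.all n 𝕆 A))

/-- `EPAω`'s axioms as a set of formulas. -/
def EPA : Set CForm := fun A => EPAAx A

/-- The quantifier-free axiom of choice `QF-AC⁰⁰`. -/
inductive QFAC : CForm → Prop
  | mk (A : CForm) (x y Y : ℕ) (hqf : A.qf) (hxy : x ≠ y)
      (hY : (Y, Ty1) ∉ A.fvars)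
      (hff : CForm.FreeFor ((Tm.var Y Ty1).app (v0 x)) y A) :
      QFAC ((CForm.all x 𝕆 (.ex y 𝕆 A)).imp
        (.ex Y Ty1 (.all x 𝕆 (A.substTm y ((Tm.var Y Ty1).app (v0 x))))))

/-- `QF-AC⁰⁰` as a set of formulas. -/
def QFA : Set CForm := fun A => QFAC A

/-- Gentzen-style two-sided sequent calculus for classical logic over `Tm`,
with axioms from the set `Ax`. `CProof Ax Γ Δ` means `Γ ⊢ Δ` is derivable. -/
inductive CProof (Ax : Set CForm) : List CForm → List CForm → Prop
  | ax {A} (h : A ∈ Ax) : CProof Ax [] [A]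
  | id (A) : CProof Ax [A] [A]
  | cut {Γ Δ Γ' Δ' A} :
      CProof Ax Γ (A :: Δ) → CProof Ax (A :: Γ') Δ' → CProof Ax (Γ ++ Γ') (Δ ++ Δ')
  | permL {Γ Γ' Δ} : CProof Ax Γ Δ → Γ.Perm Γ' → CProof Ax Γ' Δ
  | permR {Γ Δ Δ'} : CProof Ax Γ Δ → Δ.Perm Δ' → CProof Ax Γ Δ'
  | wkL {Γ Δ} (A) : CProof Ax Γ Δ → CProof Ax (A :: Γ) Δ
  | wkR {Γ Δ} (A) : CProof Ax Γ Δ → CProof Ax Γ (A :: Δ)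
  | conL {Γ Δ A} : CProof Ax (A :: A :: Γ) Δ → CProof Ax (A :: Γ) Δ
  | conR {Γ Δ A} : CProof Ax Γ (A :: A :: Δ) → CProof Ax Γ (A :: Δ)
  | notL {Γ Δ A} : CProof Ax Γ (A :: Δ) → CProof Ax (CForm.not A :: Γ) Δ
  | notR {Γ Δ A} : CProof Ax (A :: Γ) Δ → CProof Ax Γ (CForm.not A :: Δ)
  | andL {Γ Δ A B} : CProof Ax (A :: B :: Γ) Δ → CProof Ax ((CForm.and A B) :: Γ) Δ
  | andR {Γ Δ A B} :
      CProof Ax Γ (A :: Δ) → CProof Ax Γ (B :: Δ) → CProof Ax Γ ((CForm.and A B) :: Δ)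
  | orL {Γ Δ A B} :
      CProof Ax (A :: Γ) Δ → CProof Ax (B :: Γ) Δ → CProof Ax ((CForm.or A B) :: Γ) Δ
  | orR {Γ Δ A B} : CProof Ax Γ (A :: B :: Δ) → CProof Ax Γ ((CForm.or A B) :: Δ)
  | impL {Γ Δ A B} :
      CProof Ax Γ (A :: Δ) → CProof Ax (B :: Γ) Δ → CProof Ax ((CForm.imp A B) :: Γ) Δ
  | impR {Γ Δ A B} : CProof Ax (A :: Γ) (B :: Δ) → CProof Ax Γ ((CForm.imp A B) :: Δ)
  | allL {Γ Δ A n σ} (t : Tm σ) (hff : CForm.FreeFor t n A) :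
      CProof Ax ((A.substTm n t) :: Γ) Δ → CProof Ax ((CForm.all n σ A) :: Γ) Δ
  | allR {Γ Δ A n σ}
      (hfr : ∀ B ∈ Γ, (n, σ) ∉ CForm.fvars B) (hfr' : ∀ B ∈ Δ, (n, σ) ∉ CForm.fvars B) :
      CProof Ax Γ (A :: Δ) → CProof Ax Γ ((CForm.all n σ A) :: Δ)
  | exL {Γ Δ A n σ}
      (hfr : ∀ B ∈ Γ, (n, σ) ∉ CForm.fvars B) (hfr' : ∀ B ∈ Δ, (n, σ) ∉ CForm.fvars B) :
      CProof Ax (A :: Γ) Δ → CProof Ax ((CForm.ex n σ A) :: Γ) Δ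
  | exR {Γ Δ A n σ} (t : Tm σ) (hff : CForm.FreeFor t n A) :
      CProof Ax Γ ((A.substTm n t) :: Δ) → CProof Ax Γ ((CForm.ex n σ A) :: Δ)

/-- Formulas of the linear calculi `ELPAω_lp` / `ELPAω_eq` (in negation normal form,
with dual pairs of atoms). `ph`/`nph` is a placeholder (and its dual). -/
inductive LForm : Type
  | one : LForm
  | zer : LForm
  | top : LForm
  | bot : LForm
  | eq : Tm 𝕆 → Tm 𝕆 → LForm
  | neq : Tm 𝕆 → Tm 𝕆 → LForm
  | lp : (τ : Ty) → Tm τ → LForm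
  | nlp : (τ : Ty) → Tm τ → LForm
  | deq : Tm 𝕆 → Tm 𝕆 → LForm
  | ndeq : Tm 𝕆 → Tm 𝕆 → LForm
  | tag : Tm 𝕆 → LForm
  | ntag : Tm 𝕆 → LForm
  | ph : LForm
  | nph : LForm
  | tensor : LForm → LForm → LForm
  | par : LForm → LForm → LForm
  | oplus : LForm → LForm → LForm
  | withC : LForm → LForm → LForm
  | bang : LForm → LForm
  | quest : LForm → LForm
  | all : ℕ → Ty → LForm → LForm
  | ex : ℕ → Ty → LForm → LForm

/-- Linear negation `A^⊥` (an involution, by De Morgan duality). -/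
def LForm.neg : LForm → LForm
  | .one => .bot
  | .bot => .one
  | .zer => .top
  | .top => .zer
  | .eq s t => .neq s t
  | .neq s t => .eq s t
  | .lp τ t => .nlp τ t
  | .nlp τ t => .lp τ t
  | .deq s t => .ndeq s t
  | .ndeq s t => .deq s t
  | .tag t => .ntag t
  | .ntag t => .tag t
  | .ph => .nph
  | .nph => .ph
  | .tensor A B => .par A.neg B.neg
  | .par A B => .tensor A.neg B.neg
  | .oplus A B => .withC A.neg B.neg
  | .withC A B => .oplus A.neg B.neg
  | .bang A => .quest A.neg
  | .quest A => .bang A.neg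
  | .all n τ A => .ex n τ A.neg
  | .ex n τ A => .all n τ A.neg

/-- Linear implication `A ⊸ B :≡ A^⊥ ⅋ B`. -/
def LForm.limp (A B : LForm) : LForm := .par A.neg B

/-- Free variables of a linear formula. -/
def LForm.fvars : LForm → Set (ℕ × Ty)
  | .eq s t => s.fvars ∪ t.fvars
  | .neq s t => s.fvars ∪ t.fvars
  | .deq s t => s.fvars ∪ t.fvars
  | .ndeq s t => s.fvars ∪ t.fvars
  | .lp _ t => t.fvars
  | .nlp _ t => t.fvars
  | .tag t => t.fvars
  | .ntag t => t.fvars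
  | .tensor A B => A.fvars ∪ B.fvars
  | .par A B => A.fvars ∪ B.fvars
  | .oplus A B => A.fvars ∪ B.fvars
  | .withC A B => A.fvars ∪ B.fvars
  | .bang A => A.fvars
  | .quest A => A.fvars
  | .all n τ A => A.fvars \ {(n, τ)}
  | .ex n τ A => A.fvars \ {(n, τ)}
  | _ => ∅

/-- A strict upper bound for all variable indices occurring in a linear formula. -/
def LForm.maxVar : LForm → ℕ
  | .eq s t => max s.maxVar t.maxVar
  | .neq s t => max s.maxVar t.maxVar
  | .deq s t => max s.maxVar t.maxVar
  | .ndeq s t => max s.maxVar t.maxVar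
  | .lp _ t => t.maxVar
  | .nlp _ t => t.maxVar
  | .tag t => t.maxVar
  | .ntag t => t.maxVar
  | .tensor A B => max A.maxVar B.maxVar
  | .par A B => max A.maxVar B.maxVar
  | .oplus A B => max A.maxVar B.maxVar
  | .withC A B => max A.maxVar B.maxVar
  | .bang A => A.maxVar
  | .quest A => A.maxVar
  | .all n _ A => max (n + 1) A.maxVar
  | .ex n _ A => max (n + 1) A.maxVar
  | _ => 0

/-- Substitution of a term for a variable in a linear formula (naive). -/
def LForm.substTm (A : LForm) (n : ℕ) {σ : Ty} (s : Tm σ) : LForm :=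
  match A with
  | .eq a b => .eq (a.subst n s) (b.subst n s)
  | .neq a b => .neq (a.subst n s) (b.subst n s)
  | .deq a b => .deq (a.subst n s) (b.subst n s)
  | .ndeq a b => .ndeq (a.subst n s) (b.subst n s)
  | .lp τ t => .lp τ (t.subst n s)
  | .nlp τ t => .nlp τ (t.subst n s)
  | .tag t => .tag (t.subst n s)
  | .ntag t => .ntag (t.subst n s)
  | .tensor A B => .tensor (A.substTm n s) (B.substTm n s)
  | .par A B => .par (A.substTm n s) (B.substTm n s)
  | .oplus A B => .oplus (A.substTm n s) (B.substTm n s)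
  | .withC A B => .withC (A.substTm n s) (B.substTm n s)
  | .bang A => .bang (A.substTm n s)
  | .quest A => .quest (A.substTm n s)
  | .all m τ A => if m = n ∧ τ = σ then .all m τ A else .all m τ (A.substTm n s)
  | .ex m τ A => if m = n ∧ τ = σ then .ex m τ A else .ex m τ (A.substTm n s)
  | B => B

/-- `s` is free for the variable `(n, σ)` in the linear formula `A`. -/
def LForm.FreeFor {σ : Ty} (s : Tm σ) (n : ℕ) : LForm → Prop
  | .tensor A B => LForm.FreeFor s n A ∧ LForm.FreeFor s n B
  | .par A B => LForm.FreeFor s n A ∧ LForm.FreeFor s n B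
  | .oplus A B => LForm.FreeFor s n A ∧ LForm.FreeFor s n B
  | .withC A B => LForm.FreeFor s n A ∧ LForm.FreeFor s n B
  | .bang A => LForm.FreeFor s n A
  | .quest A => LForm.FreeFor s n A
  | .all m τ A =>
      ((n, σ) ∉ (A.fvars \ {(m, τ)})) ∨ (((m, τ) ∉ s.fvars) ∧ LForm.FreeFor s n A)
  | .ex m τ A =>
      ((n, σ) ∉ (A.fvars \ {(m, τ)})) ∨ (((m, τ) ∉ s.fvars) ∧ LForm.FreeFor s n A)
  | _ => True

/-- Nonlinear formulas: those containing no `⊕`, `&` and no linear predicate. -/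
def LForm.Nonlinear : LForm → Prop
  | .oplus _ _ => False
  | .withC _ _ => False
  | .lp _ _ => False
  | .nlp _ _ => False
  | .tensor A B => A.Nonlinear ∧ B.Nonlinear
  | .par A B => A.Nonlinear ∧ B.Nonlinear
  | .bang A => A.Nonlinear
  | .quest A => A.Nonlinear
  | .all _ _ A => A.Nonlinear
  | .ex _ _ A => A.Nonlinear
  | _ => True

/-- Formulas containing neither dot-equality nor the tagging predicate. -/
def LForm.NoDotTag : LForm → Prop
  | .deq _ _ => False
  | .ndeq _ _ => False
  | .tag _ => False
  | .ntag _ => False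
  | .tensor A B => A.NoDotTag ∧ B.NoDotTag
  | .par A B => A.NoDotTag ∧ B.NoDotTag
  | .oplus A B => A.NoDotTag ∧ B.NoDotTag
  | .withC A B => A.NoDotTag ∧ B.NoDotTag
  | .bang A => A.NoDotTag
  | .quest A => A.NoDotTag
  | .all _ _ A => A.NoDotTag
  | .ex _ _ A => A.NoDotTag
  | _ => True

/-- The Girard embedding `A ↦ A^L` of classical formulas into linear logic:
`∧ ↦ ⊗`, `∨ ↦ ⅋`, `¬ ↦ (·)^⊥`, `→ ↦ ⊸`. -/
def CForm.emb : CForm → LForm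
  | .eq s t => .eq s t
  | .not A => A.emb.neg
  | .and A B => .tensor A.emb B.emb
  | .or A B => .par A.emb B.emb
  | .imp A B => .par A.emb.neg B.emb
  | .all n τ A => .all n τ A.emb
  | .ex n τ A => .ex n τ A.emb

/-- Higher-type linear equality: `s =_{ρ ⤳ τ} t :≡ ∀x (s x =_τ t x)`. -/
def leqAt : (τ : Ty) → Tm τ → Tm τ → LForm
  | 𝕆, s, t => .eq s t
  | .arr σ τ, s, t =>
      let n := max s.maxVar t.maxVar
      .all n σ (leqAt τ (s.app (.var n σ)) (t.app (.var n σ)))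

/-- Higher-type dot-equality: `s ≐_{ρ ⤳ τ} t :≡ ∀x (s x ≐_τ t x)`. -/
def deqAt : (τ : Ty) → Tm τ → Tm τ → LForm
  | 𝕆, s, t => .deq s t
  | .arr σ τ, s, t =>
      let n := max s.maxVar t.maxVar
      .all n σ (deqAt τ (s.app (.var n σ)) (t.app (.var n σ)))

/-- Left part of the linear axiom of choice `(lAC)`:
`(∀x⁰ ∃y⁰ α x y =₀ 0)^⊥`. -/
def lACleft (a x y : ℕ) : LForm :=
  (LForm.all x 𝕆 (.ex y 𝕆
    (.eq (((Tm.var a Ty2).app (v0 x)).app (v0 y)) .zero))).neg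

/-- Right part of the linear axiom of choice `(lAC)`:
`∃Y¹ (∀x⁰ (α x (Y x) =₀ 0) ⊗ !(lp(α) ⊸ lp(Y)))`. -/
def lACright (a Y x : ℕ) : LForm :=
  .ex Y Ty1 ((LForm.all x 𝕆
      (.eq (((Tm.var a Ty2).app (v0 x)).app ((Tm.var Y Ty1).app (v0 x))) .zero)).tensor
    (.bang ((LForm.lp Ty2 (.var a Ty2)).limp (.lp Ty1 (.var Y Ty1)))))

/-- One-sided sequent calculus for the linear systems. `LProof affine eqc Ax Γ` means
that the sequent `⊢ Γ` is derivable, where: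
* `affine = true` adds unrestricted weakening `(w)` (the affine calculi `EAPAω`),
* `eqc = true` adds the dot-equality/tagging rules of the `_eq` calculi and restricts
  `(!₂)` to nonlinear formulas without `≐`/`□`,
* `Ax` is a set of classical formulas whose Girard embeddings are available as axioms
  (the embedded `EPAω` axioms plus possibly further formulas `Γ^L`). -/
inductive LProof (affine eqc : Bool) (Ax : Set CForm) : List LForm → Prop
  | fromAx {A} (h : A ∈ Ax) : LProof affine eqc Ax [A.emb]
  | id (A : LForm) : LProof affine eqc Ax [A, A.neg]
  | cut {Γ Δ A} :
      LProof affine eqc Ax (A :: Γ) → LProof affine eqc Ax (A.neg :: Δ) →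
      LProof affine eqc Ax (Γ ++ Δ)
  | perm {Γ Γ'} : LProof affine eqc Ax Γ → Γ.Perm Γ' → LProof affine eqc Ax Γ'
  | tensor {Γ Δ A B} :
      LProof affine eqc Ax (A :: Γ) → LProof affine eqc Ax (B :: Δ) →
      LProof affine eqc Ax ((LForm.tensor A B) :: Γ ++ Δ)
  | par {Γ A B} :
      LProof affine eqc Ax (A :: B :: Γ) → LProof affine eqc Ax ((LForm.par A B) :: Γ)
  | one : LProof affine eqc Ax [.one]
  | botR {Γ} : LProof affine eqc Ax Γ → LProof affine eqc Ax (.bot :: Γ)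
  | withR {Γ A B} :
      LProof affine eqc Ax (A :: Γ) → LProof affine eqc Ax (B :: Γ) →
      LProof affine eqc Ax ((LForm.withC A B) :: Γ)
  | top {Γ} : LProof affine eqc Ax (.top :: Γ)
  | oplus1 {Γ A B} : LProof affine eqc Ax (A :: Γ) →
      LProof affine eqc Ax ((LForm.oplus A B) :: Γ)
  | oplus2 {Γ A B} : LProof affine eqc Ax (B :: Γ) →
      LProof affine eqc Ax ((LForm.oplus A B) :: Γ)
  | bangR {Γ A} (h : ∀ B ∈ Γ, ∃ C, B = LForm.quest C) :
      LProof affine eqc Ax (A :: Γ) → LProof affine eqc Ax ((LForm.bang A) :: Γ)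
  | der {Γ A} : LProof affine eqc Ax (A :: Γ) →
      LProof affine eqc Ax ((LForm.quest A) :: Γ)
  | wkq {Γ} (A) : LProof affine eqc Ax Γ → LProof affine eqc Ax ((LForm.quest A) :: Γ)
  | conq {Γ A} :
      LProof affine eqc Ax (LForm.quest A :: LForm.quest A :: Γ) →
      LProof affine eqc Ax (LForm.quest A :: Γ)
  | allR {Γ A n σ} (h : ∀ B ∈ Γ, (n, σ) ∉ LForm.fvars B) :
      LProof affine eqc Ax (A :: Γ) → LProof affine eqc Ax ((LForm.all n σ A) :: Γ)
  | exR {Γ A n σ} (t : Tm σ) (hff : LForm.FreeFor t n A) :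
      LProof affine eqc Ax ((A.substTm n t) :: Γ) →
      LProof affine eqc Ax ((LForm.ex n σ A) :: Γ)
  -- axioms and rules for the linear predicate
  | lpAx {τ} (t : Tm τ) (h : t.Closed) : LProof affine eqc Ax [.lp τ t]
  | bang2 {A} (h : A.Nonlinear) (h2 : eqc = true → A.NoDotTag) :
      LProof affine eqc Ax [A.neg, .bang A]
  | lpCon {Γ τ t} :
      LProof affine eqc Ax (LForm.nlp τ t :: LForm.nlp τ t :: Γ) →
      LProof affine eqc Ax (LForm.nlp τ t :: Γ)
  | lpApp {ρ τ} (t : Tm (ρ ⤳ τ)) (r : Tm ρ) :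
      LProof affine eqc Ax [.nlp (ρ ⤳ τ) t, .nlp ρ r, .lp τ (t.app r)]
  | lAC (a Y x y : ℕ) (hxy : x ≠ y) :
      LProof affine eqc Ax [lACleft a x y, lACright a Y x]
  -- unrestricted weakening for the affine calculi
  | wk {Γ} (A) (h : affine = true) : LProof affine eqc Ax Γ →
      LProof affine eqc Ax (A :: Γ)
  -- rules of the `_eq` calculi
  | dotSucc (n : ℕ) (h : eqc = true) :
      LProof affine eqc Ax [.bang (.ndeq (Tm.app Tm.succ (v0 n)) .zero)]
  | dotEq1 {τ} {s t : Tm τ} (h : eqc = true) :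
      LProof affine eqc Ax [leqAt τ s t] → LProof affine eqc Ax [.bang (deqAt τ s t)]
  | dotEq2 (k : ℕ) (h : eqc = true) :
      LProof affine eqc Ax
        [(LForm.bang (.ndeq (v0 k) .zero)).neg, .bang (.deq (sgT.app (v0 k)) tm1)]
  | dotSub {τ} (x y z : ℕ) (A : LForm) (h : eqc = true)
      (hfx : LForm.FreeFor (Tm.var x τ) z A) (hfy : LForm.FreeFor (Tm.var y τ) z A) :
      LProof affine eqc Ax [(LForm.bang (deqAt τ (.var x τ) (.var y τ))).neg,
        (A.substTm z (Tm.var x τ)).neg, A.substTm z (Tm.var y τ)]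
  | tag0 (h : eqc = true) : LProof affine eqc Ax [.tag (sgT.app .zero)]
  | tagCon {Γ t} (h : eqc = true) :
      LProof affine eqc Ax (LForm.ntag t :: LForm.ntag t :: Γ) →
      LProof affine eqc Ax (LForm.ntag t :: Γ)
  | tagApp (x y : ℕ) (h : eqc = true) :
      LProof affine eqc Ax [.ntag (sgT.app (v0 x)), .ntag (sgT.app (v0 y)),
        .tag (sgT.app ((addT.app (v0 x)).app (v0 y)))]

/-- The linear universal quantifier `∀^lp x A :≡ ∀x (lp(x) ⊸ A)`. -/
def allLp (n : ℕ) (τ : Ty) (A : LForm) : LForm :=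
  .all n τ ((LForm.lp τ (.var n τ)).limp A)

/-- The linear existential quantifier `∃^lp x A :≡ ∃x (lp(x) ⊗ A)`. -/
def exLp (n : ℕ) (τ : Ty) (A : LForm) : LForm :=
  .ex n τ ((LForm.lp τ (.var n τ)).tensor A)

/-- The ε-guarded linear existential quantifier `∃^lp_ε x A :≡ ∃x (lp(x) ⊗ ε =₀ 0 ⊗ A)`. -/
def exLpE (e n : ℕ) (τ : Ty) (A : LForm) : LForm :=
  .ex n τ ((LForm.lp τ (.var n τ)).tensor ((LForm.eq (v0 e) .zero).tensor A))

/-- `halts(t·z) :≡ ∀u⁰ ∃v⁰ (t(⟨u⟩ * z̄v) ≠₀ 0)`. -/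
def haltsF (t z : Tm Ty1) : CForm :=
  let u := max t.maxVar z.maxVar
  let v := u + 1
  .all u 𝕆 (.ex v 𝕆
    (neqF (t.app (((seqCodeT.app z).app (v0 u)).app (v0 v))) .zero))

/-- `wit(t·z, x) :≡ ∀u⁰ ∃v⁰ (t(⟨u⟩ * z̄v) =₀ x(u)+1 ∧ ∀w <₀ v (t(⟨u⟩ * z̄w) =₀ 0))`. -/
def witF (t z x : Tm Ty1) : CForm :=
  let u := max (max t.maxVar z.maxVar) x.maxVar
  let v := u + 1
  let w := u + 2
  .all u 𝕆 (.ex v 𝕆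
    ((CForm.eq (t.app (((seqCodeT.app z).app (v0 u)).app (v0 v)))
        (Tm.app Tm.succ (x.app (v0 u)))).and
     (.all w 𝕆 ((ltF (v0 w) (v0 v)).imp
        (.eq (t.app (((seqCodeT.app z).app (v0 u)).app (v0 w))) .zero)))))

/-- `con_τ(s, t)`: the term `s` of type `comp τ` constructs the term `t` of type `τ`. -/
def conF : (τ : Ty) → Tm τ.comp → Tm τ → CForm
  | 𝕆, s, t =>
      let x := max s.maxVar t.maxVar
      (CForm.ex x 𝕆 (neqF (s.app (v0 x)) .zero)).and
        (.all x 𝕆 ((neqF (s.app (v0 x)) .zero).imp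
          (.eq (s.app (v0 x)) (Tm.app Tm.succ t))))
  | .arr ρ τ, s, t =>
      let n := max s.maxVar t.maxVar
      .all n ρ.comp (.all (n + 1) ρ
        ((conF ρ (.var n ρ.comp) (.var (n + 1) ρ)).imp
          (conF τ (s.app (.var n ρ.comp)) (t.app (.var (n + 1) ρ)))))

/-! ### Dialectica interpretation -/

/-- Iterated function type `arrows [σ₁,…,σₖ] τ = σ₁ ⤳ ⋯ ⤳ σₖ ⤳ τ`. -/
def arrows (args : List Ty) (τ : Ty) : Ty := args.foldr Ty.arr τ

/-- Abstract each type in `l` over the argument types `args`. -/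
def absTys (args : List Ty) (l : List Ty) : List Ty := l.map (arrows args)

/-- Witness and counterexample type tuples of the Dialectica interpretation,
parametrized by the witness type `lpW τ` assigned to the linear predicate `lp_τ`. -/
def wcty (lpW : Ty → Ty) : LForm → List Ty × List Ty
  | .lp τ _ => ([lpW τ], [])
  | .nlp τ _ => ([], [lpW τ])
  | .tensor A B =>
      ((wcty lpW A).1 ++ (wcty lpW B).1,
       absTys (wcty lpW B).1 (wcty lpW A).2 ++ absTys (wcty lpW A).1 (wcty lpW B).2)
  | .par A B =>
      (absTys (wcty lpW B).2 (wcty lpW A).1 ++ absTys (wcty lpW A).2 (wcty lpW B).1,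
       (wcty lpW A).2 ++ (wcty lpW B).2)
  | .oplus A B =>
      ((wcty lpW A).1 ++ ((wcty lpW B).1 ++ [𝕆]), (wcty lpW A).2 ++ (wcty lpW B).2)
  | .withC A B =>
      ((wcty lpW A).1 ++ (wcty lpW B).1, (wcty lpW A).2 ++ ((wcty lpW B).2 ++ [𝕆]))
  | .bang A => ((wcty lpW A).1, [])
  | .quest A => ([], (wcty lpW A).2)
  | .all _ _ A => wcty lpW A
  | .ex _ _ A => wcty lpW A
  | _ => ([], [])

/-- Witness types of `A`. -/
abbrev wty (lpW : Ty → Ty) (A : LForm) : List Ty := (wcty lpW A).1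
/-- Counterexample types of `A`. -/
abbrev cty (lpW : Ty → Ty) (A : LForm) : List Ty := (wcty lpW A).2

/-- Heterogeneous tuples of terms. -/
inductive Tms : List Ty → Type
  | nil : Tms []
  | cons {τ l} : Tm τ → Tms l → Tms (τ :: l)

/-- Left part of a split tuple. -/
def Tms.splitl : {l l' : List Ty} → Tms (l ++ l') → Tms l
  | [], _, _ => .nil
  | _ :: _, _, .cons a u => .cons a (Tms.splitl u)

/-- Right part of a split tuple. -/
def Tms.splitr : {l l' : List Ty} → Tms (l ++ l') → Tms l'
  | [], _, v => v
  | _ :: _, _, .cons _ u => Tms.splitr u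

/-- Head of a nonempty tuple. -/
def Tms.hd : {τ : Ty} → {l : List Ty} → Tms (τ :: l) → Tm τ
  | _, _, .cons a _ => a

/-- Apply a term of iterated function type to a tuple of arguments. -/
def appAll : {args : List Ty} → {τ : Ty} → Tm (arrows args τ) → Tms args → Tm τ
  | [], _, t, _ => t
  | _ :: _, _, t, .cons u us => appAll (t.app u) us

/-- Apply each member of a tuple of functionals to the same argument tuple. -/
def appEach : {l : List Ty} → {args : List Ty} → Tms (absTys args l) → Tms args → Tms l
  | [], _, _, _ => .nil
  | _ :: _, _, .cons f fs, us => .cons (appAll f us) (appEach fs us)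

/-- The tuple of variables with indices `n, n+1, …` and types from `l`. -/
def varTms : (l : List Ty) → ℕ → Tms l
  | [], _ => .nil
  | τ :: l, n => .cons (.var n τ) (varTms l (n + 1))

/-- The tuple of variables with indices `g 0, g 1, …` and types from `l`. -/
def mkVarTms : (l : List Ty) → (ℕ → ℕ) → Tms l
  | [], _ => .nil
  | τ :: l, g => .cons (.var (g 0) τ) (mkVarTms l (fun k => g (k + 1)))

/-- Universal quantifier prefix over fresh variables `n, n+1, …` of types `l`. -/
def allPre : (l : List Ty) → ℕ → LForm → LForm
  | [], _, A => A
  | τ :: l, n, A => .all n τ (allPre l (n + 1) A)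

/-- Existential quantifier prefix over fresh variables `n, n+1, …` of types `l`. -/
def exPre : (l : List Ty) → ℕ → LForm → LForm
  | [], _, A => A
  | τ :: l, n, A => .ex n τ (exPre l (n + 1) A)

/-- Free variables of a tuple of terms. -/
def Tms.fvars : {l : List Ty} → Tms l → Set (ℕ × Ty)
  | _, .nil => ∅
  | _, .cons a u => a.fvars ∪ u.fvars

/-- A strict upper bound for all variable indices occurring in a tuple. -/
def Tms.maxVar : {l : List Ty} → Tms l → ℕ
  | _, .nil => 0
  | _, .cons a u => max a.maxVar u.maxVar

/-- Gödel's Dialectica interpretation `|A|^w_c` for linear logic with linear predicate,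
parametrized by the interpretation `lpI` of the linear predicate
(`|lp_τ(t)|^x :≡ lpI τ t x`). -/
def dia (lpW : Ty → Ty) (lpI : (τ : Ty) → Tm τ → Tm (lpW τ) → LForm) :
    (A : LForm) → Tms (wty lpW A) → Tms (cty lpW A) → LForm
  | .one, _, _ => .one
  | .zer, _, _ => .zer
  | .top, _, _ => .top
  | .bot, _, _ => .bot
  | .eq s t, _, _ => .eq s t
  | .neq s t, _, _ => .neq s t
  | .deq s t, _, _ => .deq s t
  | .ndeq s t, _, _ => .ndeq s t
  | .tag t, _, _ => .tag t
  | .ntag t, _, _ => .ntag t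
  | .ph, _, _ => .ph
  | .nph, _, _ => .nph
  | .lp τ t, w, _ => lpI τ t (Tms.hd w)
  | .nlp τ t, _, c => (lpI τ t (Tms.hd c)).neg
  | .tensor A B, w, c =>
      let x := Tms.splitl (l := wty lpW A) (l' := wty lpW B) w
      let u := Tms.splitr (l := wty lpW A) (l' := wty lpW B) w
      let f := Tms.splitl (l := absTys (wty lpW B) (cty lpW A))
        (l' := absTys (wty lpW A) (cty lpW B)) c
      let g := Tms.splitr (l := absTys (wty lpW B) (cty lpW A))
        (l' := absTys (wty lpW A) (cty lpW B)) c
      (dia lpW lpI A x (appEach f u)).tensor (dia lpW lpI B u (appEach g x))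
  | .par A B, w, c =>
      let f := Tms.splitl (l := absTys (cty lpW B) (wty lpW A))
        (l' := absTys (cty lpW A) (wty lpW B)) w
      let g := Tms.splitr (l := absTys (cty lpW B) (wty lpW A))
        (l' := absTys (cty lpW A) (wty lpW B)) w
      let x := Tms.splitl (l := cty lpW A) (l' := cty lpW B) c
      let u := Tms.splitr (l := cty lpW A) (l' := cty lpW B) c
      (dia lpW lpI A (appEach f u) x).par (dia lpW lpI B (appEach g x) u)
  | .oplus A B, w, c =>
      let x := Tms.splitl (l := wty lpW A) (l' := wty lpW B ++ [𝕆]) w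
      let r := Tms.splitr (l := wty lpW A) (l' := wty lpW B ++ [𝕆]) w
      let u := Tms.splitl (l := wty lpW B) (l' := [𝕆]) r
      let k0 := Tms.hd (Tms.splitr (l := wty lpW B) (l' := [𝕆]) r)
      let y := Tms.splitl (l := cty lpW A) (l' := cty lpW B) c
      let v := Tms.splitr (l := cty lpW A) (l' := cty lpW B) c
      ((LForm.bang (.deq k0 .zero)).tensor (dia lpW lpI A x y)).oplus
        ((LForm.bang (.ndeq k0 .zero)).tensor (dia lpW lpI B u v))
  | .withC A B, w, c =>
      let x := Tms.splitl (l := wty lpW A) (l' := wty lpW B) w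
      let u := Tms.splitr (l := wty lpW A) (l' := wty lpW B) w
      let y := Tms.splitl (l := cty lpW A) (l' := cty lpW B ++ [𝕆]) c
      let r := Tms.splitr (l := cty lpW A) (l' := cty lpW B ++ [𝕆]) c
      let v := Tms.splitl (l := cty lpW B) (l' := [𝕆]) r
      let k0 := Tms.hd (Tms.splitr (l := cty lpW B) (l' := [𝕆]) r)
      ((LForm.bang (.deq k0 .zero)).limp (dia lpW lpI A x y)).withC
        ((LForm.bang (.ndeq k0 .zero)).limp (dia lpW lpI B u v))
  | .bang A, w, _ =>
      let n := max A.maxVar w.maxVar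
      .bang (allPre (cty lpW A) n (dia lpW lpI A w (varTms (cty lpW A) n)))
  | .quest A, _, c =>
      let n := max A.maxVar c.maxVar
      .quest (exPre (wty lpW A) n (dia lpW lpI A (varTms (wty lpW A) n) c))
  | .all m τ A, w, c => .all m τ (dia lpW lpI A w c)
  | .ex m τ A, w, c => .ex m τ (dia lpW lpI A w c)

/-- The tagging interpretation of the linear predicate:
`|lp_τ(t)|^{x⁰} :≡ lp_τ(t) ⊗ □(sg x)`. -/
def lpWTag : Ty → Ty := fun _ => 𝕆
/-- The tagging interpretation of the linear predicate. -/
def lpITag : (τ : Ty) → Tm τ → Tm 𝕆 → LForm :=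
  fun τ t x => (LForm.lp τ t).tensor (.tag (sgT.app x))

/-- The computability interpretation of the linear predicate:
`|lp_τ(t)|^{x^{comp τ}} :≡ (con_τ(x, t))^L`. -/
def lpWCon : Ty → Ty := Ty.comp
/-- The computability interpretation of the linear predicate. -/
def lpICon : (τ : Ty) → Tm τ → Tm τ.comp → LForm :=
  fun τ t x => (conF τ x t).emb

/-! ### Standard model and simple phase semantics -/

/-- Set-theoretic denotation of the finite types (the full standard model). -/
def Ty.den : Ty → Type
  | 𝕆 => ℕ
  | .arr σ τ => σ.den → τ.den

/-- Default element of each type. -/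
def Ty.dflt : (τ : Ty) → τ.den
  | 𝕆 => (0 : ℕ)
  | .arr _ τ => fun _ => τ.dflt

/-- Variable environments for the standard model. -/
def Env : Type := (n : ℕ) → (τ : Ty) → τ.den

/-- The default environment. -/
def Env.default : Env := fun _ τ => τ.dflt

/-- Update an environment at a variable. -/
def Env.upd (e : Env) (n : ℕ) {σ : Ty} (a : σ.den) : Env :=
  fun m ρ => if h : m = n ∧ ρ = σ then (by rw [h.2]; exact a) else e m ρ

/-- Denotation of terms in the standard model. -/
def Tm.den : {τ : Ty} → Tm τ → Env → τ.den
  | _, .var n τ, e => e n τ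
  | _, .zero, _ => (0 : ℕ)
  | _, .succ, _ => Nat.succ
  | _, .K _ _, _ => fun a _ => a
  | _, .S _ _ _, _ => fun x y z => x z (y z)
  | _, .R _, _ => fun y z n => Nat.rec y (fun m ih => z m ih) n
  | _, .lam n σ t, e => fun a => Tm.den t (e.upd n (σ := σ) a)
  | _, .app f a, e => (Tm.den f e) (Tm.den a e)

/-- Variable assignments: every variable of type `τ` is mapped to a closed term of type `τ`
(closedness is a separate hypothesis). -/
def Assg : Type := (n : ℕ) → (τ : Ty) → Tm τ

/-- The environment induced by an assignment. -/
def Assg.env (β : Assg) : Env := fun n τ => (β n τ).den Env.default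

/-- Update an assignment at a variable. -/
def Assg.upd (β : Assg) (n : ℕ) {σ : Ty} (s : Tm σ) : Assg :=
  fun m ρ => if h : m = n ∧ ρ = σ then (by rw [h.2]; exact s) else β m ρ

/-- Numerical value of a term of type `0` under an assignment. -/
def Assg.val (β : Assg) (t : Tm 𝕆) : ℕ := t.den β.env

/-- The phase space `P = {0, 1}` is modelled by `Bool` with multiplication `&&`;
the set of antiphases is `{1} = {true}`.  `pol Q = Q^⊥`. -/
def pol (Q : Set Bool) : Set Bool := {p | ∀ q ∈ Q, (p && q) = true}

/-- Simple phase semantics for `ELPAω_eq` over the phase space `{0,1}`.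
`tagPos` is the fixed choice (`∅` or `{0,1}`) of the semantics of `□(t)` for
positive values of `t`. -/
def sem (tagPos : Set Bool) : LForm → Assg → Set Bool
  | .one, _ => {true}
  | .bot, _ => pol {true}
  | .top, _ => Set.univ
  | .zer, _ => pol Set.univ
  | .eq _ _, _ => {true}
  | .neq _ _, _ => pol {true}
  | .lp _ _, _ => {true}
  | .nlp _ _, _ => pol {true}
  | .ph, _ => {true}
  | .nph, _ => pol {true}
  | .deq s t, β => if β.val s = β.val t then Set.univ else ∅
  | .ndeq s t, β => pol (if β.val s = β.val t then Set.univ else ∅)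
  | .tag t, β => if β.val t = 0 then {true} else tagPos
  | .ntag t, β => pol (if β.val t = 0 then {true} else tagPos)
  | .tensor A B, β => {p | ∃ a ∈ sem tagPos A β, ∃ b ∈ sem tagPos B β, p = (a && b)}
  | .withC A B, β => sem tagPos A β ∪ sem tagPos B β
  | .quest A, β => sem tagPos A β ∪ {true}
  | .all n σ A, β => ⋂ (s : {t : Tm σ // t.Closed}), sem tagPos A (β.upd n s.1)
  | .par A B, β =>
      pol {p | ∃ a ∈ pol (sem tagPos A β), ∃ b ∈ pol (sem tagPos B β), p = (a && b)}
  | .oplus A B, β => pol (pol (sem tagPos A β) ∪ pol (sem tagPos B β))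
  | .bang A, β => pol (pol (sem tagPos A β) ∪ {true})
  | .ex n σ A, β =>
      pol (⋂ (s : {t : Tm σ // t.Closed}), pol (sem tagPos A (β.upd n s.1)))

/-- `0 =₀ 0`. -/
def eq00 : CForm := .eq .zero .zero
/-- `1 =₀ 0`. -/
def eq10 : CForm := .eq tm1 .zero

/-- The collapse of linear formulas to classical formulas:
`1, ⊤, lp, □ ↦ 0=0`; `0, ⊥ ↦ 1=0`; `⊗, & ↦ ∧`; `⅋, ⊕ ↦ ∨`; `≐ ↦ =`;
linear negation `↦ ¬`; the modalities are omitted. -/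
def LForm.collapse : LForm → CForm
  | .one => eq00
  | .top => eq00
  | .lp _ _ => eq00
  | .tag _ => eq00
  | .ph => eq00
  | .zer => eq10
  | .bot => eq10
  | .eq s t => .eq s t
  | .deq s t => .eq s t
  | .neq s t => .not (.eq s t)
  | .ndeq s t => .not (.eq s t)
  | .nlp _ _ => .not eq00
  | .ntag _ => .not eq00
  | .nph => .not eq00
  | .tensor A B => .and A.collapse B.collapse
  | .withC A B => .and A.collapse B.collapse
  | .par A B => .or A.collapse B.collapse
  | .oplus A B => .or A.collapse B.collapse
  | .bang A => A.collapse
  | .quest A => A.collapse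
  | .all n τ A => .all n τ A.collapse
  | .ex n τ A => .ex n τ A.collapse

/-- The placeholder `$` occurs only positively in `A`
(after unraveling all abbreviations and involutions, `A` does not contain `$^⊥`). -/
def LForm.PosPh : LForm → Prop
  | .nph => False
  | .tensor A B => A.PosPh ∧ B.PosPh
  | .par A B => A.PosPh ∧ B.PosPh
  | .oplus A B => A.PosPh ∧ B.PosPh
  | .withC A B => A.PosPh ∧ B.PosPh
  | .bang A => A.PosPh
  | .quest A => A.PosPh
  | .all _ _ A => A.PosPh
  | .ex _ _ A => A.PosPh
  | _ => True

/-- Substitute the formula `P` for the placeholder `$` in `A`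
(and `P^⊥` for `$^⊥`). -/
def LForm.phSubst (A P : LForm) : LForm :=
  match A with
  | .ph => P
  | .nph => P.neg
  | .tensor A B => .tensor (A.phSubst P) (B.phSubst P)
  | .par A B => .par (A.phSubst P) (B.phSubst P)
  | .oplus A B => .oplus (A.phSubst P) (B.phSubst P)
  | .withC A B => .withC (A.phSubst P) (B.phSubst P)
  | .bang A => .bang (A.phSubst P)
  | .quest A => .quest (A.phSubst P)
  | .all n τ A => .all n τ (A.phSubst P)
  | .ex n τ A => .ex n τ (A.phSubst P)
  | B => B


/-! ### Shared material for statements 15–17 -/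

/-- `A_at(x,y,u,v) :≡ (t x y u v =₀ 0)` for the closed characteristic term `t`. -/
def aAt (tch : Tm (Ty1 ⤳ Ty1 ⤳ 𝕆 ⤳ 𝕆 ⤳ 𝕆)) (x y : Tm Ty1) (u v : Tm 𝕆) : CForm :=
  .eq ((((tch.app x).app y).app u).app v) .zero

/-- The code of `⟨u⟩ * z̄v`. -/
def codeAt (z : Tm Ty1) (u v : Tm 𝕆) : Tm 𝕆 := ((seqCodeT.app z).app u).app v

/-- The defining property of the characteristic term `t`:
`∀x∀y∀u∀v (t x y u v =₀ 0 ↔ (x(⟨u⟩ * ȳv) ≠₀ 0 ∧ ∀w <₀ v (x(⟨u⟩ * ȳw) =₀ 0)))`. -/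
def chSpec (tch : Tm (Ty1 ⤳ Ty1 ⤳ 𝕆 ⤳ 𝕆 ⤳ 𝕆)) : CForm :=
  .all 0 Ty1 (.all 1 Ty1 (.all 2 𝕆 (.all 3 𝕆
    (iffC (aAt tch (.var 0 Ty1) (.var 1 Ty1) (v0 2) (v0 3))
      ((neqF ((Tm.var 0 Ty1).app (codeAt (.var 1 Ty1) (v0 2) (v0 3))) .zero).and
        (.all 4 𝕆 ((ltF (v0 4) (v0 3)).imp
          (.eq ((Tm.var 0 Ty1).app (codeAt (.var 1 Ty1) (v0 2) (v0 4))) .zero))))))))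


/-!
Under `∀u A_at(x, y, u, V u)`, the defining property of `t` gives, in `EPAω`,
`x(⟨u⟩ * ȳ(V u)) ≠ 0` and `x(⟨u⟩ * ȳw) = 0` for all `w < V u`. Hence `wit(x·y, Z)` holds with
`v := V u` for `Z := λu. pred (x(⟨u⟩ * ȳ(V u)))`, since a nonzero number is the successor of its
predecessor. This classical derivation is carried into `ELPAω_lp` by the Girard embedding:
embedded formulas are nonlinear, so `(!₂)` gives them weakening and contraction. Finally `Z` is a
closed term applied to `x, y, V`, so `(lp)` and `(lp-app)` turn `lp(x), lp(y), lp(V)` into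
`lp(Z)`, which is what the linear quantifier `∃^lp z` asks for.
-/

def Tm.bv : {τ : Ty} → Tm τ → Set (ℕ × Ty)
  | _, .lam m ρ t => insert (m, ρ) t.bv
  | _, .app f a => f.bv ∪ a.bv
  | _, _ => ∅

def CForm.bv : CForm → Set (ℕ × Ty)
  | .eq _ _ => ∅
  | .not A => A.bv
  | .and A B | .or A B | .imp A B => A.bv ∪ B.bv
  | .all n τ A | .ex n τ A => insert (n, τ) A.bv

/-- Binders that rebind the substituted variable itself are harmless. -/
theorem Tm.freeForIn_of_bv {σ τ : Ty} {s : Tm σ} {n : ℕ} {t : Tm τ}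
    (h : ∀ p ∈ t.bv, p = (n, σ) ∨ p ∉ s.fvars) : s.FreeForIn n t := by
  induction t with
  | lam m ρ t ih =>
    rcases h (m, ρ) (Set.mem_insert _ _) with hm | hm
    · exact .inr (.inl (Prod.mk.inj hm))
    · exact .inr (.inr ⟨hm, ih fun p hp => h p (Set.mem_insert_of_mem _ hp)⟩)
  | app f a ihf iha =>
    exact ⟨ihf fun p hp => h p (.inl hp), iha fun p hp => h p (.inr hp)⟩
  | _ => trivial

theorem CForm.freeFor_of_disjoint {σ : Ty} {s : Tm σ} {n : ℕ} {A : CForm}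
    (h : ∀ p ∈ A.bv, p ∉ s.fvars) : A.FreeFor s n := by
  induction A with
  | eq => trivial
  | not A ih => exact ih h
  | and A B iha ihb | or A B iha ihb | imp A B iha ihb =>
    exact ⟨iha fun p hp => h p (.inl hp), ihb fun p hp => h p (.inr hp)⟩
  | all m τ A ih | ex m τ A ih =>
    exact .inr ⟨h _ (Set.mem_insert _ _), ih fun p hp => h p (Set.mem_insert_of_mem _ hp)⟩

theorem Tm.subst_of_not_mem_fvars {σ τ : Ty} {s : Tm σ} {n : ℕ} {t : Tm τ}
    (h : (n, σ) ∉ t.fvars) : t.subst n s = t := by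
  induction t with
  | var m ρ =>
    have : ¬(m = n ∧ ρ = σ) := by rintro ⟨rfl, rfl⟩; exact h rfl
    simp [Tm.subst, this]
  | lam m ρ t ih =>
    by_cases hc : m = n ∧ ρ = σ
    · simp [Tm.subst, hc]
    · have : (n, σ) ∉ t.fvars := fun hn =>
        h ⟨hn, fun he => hc ⟨(Prod.mk.inj he).1.symm, (Prod.mk.inj he).2.symm⟩⟩
      simp [Tm.subst, hc, ih this]
  | app f a ihf iha =>
    simp only [Tm.fvars, Set.mem_union, not_or] at h
    simp [Tm.subst, ihf h.1, iha h.2]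
  | _ => rfl

theorem Tm.subst_of_closed {σ τ : Ty} {t : Tm τ} (h : t.Closed) (n : ℕ) (s : Tm σ) :
    t.subst n s = t :=
  Tm.subst_of_not_mem_fvars (by simp [Tm.Closed] at h; simp [h])

theorem Tm.lt_maxVar_of_mem_fvars {σ τ : Ty} {n : ℕ} {t : Tm τ} (h : (n, σ) ∈ t.fvars) :
    n < t.maxVar := by
  induction t with
  | var m ρ => cases h; simp [Tm.maxVar]
  | lam m ρ t ih => exact lt_max_of_lt_right (ih h.1)
  | app f a ihf iha =>
    rcases h with h | h
    · exact lt_max_of_lt_left (ihf h)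
    · exact lt_max_of_lt_right (iha h)
  | _ => cases h

theorem Tm.subst_of_maxVar_le {σ τ : Ty} {s : Tm σ} {n : ℕ} {t : Tm τ} (h : t.maxVar ≤ n) :
    t.subst n s = t :=
  Tm.subst_of_not_mem_fvars fun hn => (Tm.lt_maxVar_of_mem_fvars hn).not_ge h

@[simp] theorem Tm.subst_var_self (n : ℕ) {σ : Ty} (s : Tm σ) :
    (Tm.var n σ).subst n s = s := by
  simp [Tm.subst]

theorem Tm.subst_var_of_ne {m n : ℕ} (h : m ≠ n) (ρ : Ty) {σ : Ty} (s : Tm σ) :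
    (Tm.var m ρ).subst n s = .var m ρ := by
  simp [Tm.subst, h]

@[simp] theorem Tm.subst_app {σ τ ρ : Ty} (f : Tm (σ ⤳ τ)) (a : Tm σ) (n : ℕ) (s : Tm ρ) :
    (f.app a).subst n s = (f.subst n s).app (a.subst n s) := rfl

@[simp] theorem Tm.subst_zero (n : ℕ) {σ : Ty} (s : Tm σ) : Tm.zero.subst n s = .zero := rfl

@[simp] theorem Tm.subst_succ (n : ℕ) {σ : Ty} (s : Tm σ) : Tm.succ.subst n s = Tm.succ := rfl

theorem fvars_addT : addT.fvars = ∅ := by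
  ext ⟨n, τ⟩
  simp [addT, recO, Tm.fvars]

theorem fvars_seqCodeT : seqCodeT.fvars = ∅ := by
  ext ⟨n, τ⟩
  simp [seqCodeT, recO, pairT, addT, triT, Tm.fvars]

namespace CProof

variable {Ax : Set CForm}

theorem weakenL_append (Ξ : List CForm) {Γ Δ} (p : CProof Ax Γ Δ) :
    CProof Ax (Ξ ++ Γ) Δ := by
  induction Ξ with
  | nil => exact p
  | cons A Ξ ih => exact ih.wkL A

theorem weakenR_append (Ξ : List CForm) {Γ Δ} (p : CProof Ax Γ Δ) :
    CProof Ax Γ (Ξ ++ Δ) := by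
  induction Ξ with
  | nil => exact p
  | cons A Ξ ih => exact ih.wkR A

theorem contractL_append {Γ Γ' Δ} (h : Γ ⊆ Γ') (p : CProof Ax (Γ ++ Γ') Δ) :
    CProof Ax Γ' Δ := by
  classical
  induction Γ with
  | nil => exact p
  | cons A Γ ih =>
    have hA : (Γ ++ Γ').Perm (A :: (Γ ++ Γ'.erase A)) :=
      ((List.perm_cons_erase (h List.mem_cons_self)).append_left Γ).trans List.perm_middle
    exact ih (List.subset_of_cons_subset h) ((p.permL (hA.cons A)).conL.permL hA.symm)

theorem contractR_append {Γ Δ Δ'} (h : Δ ⊆ Δ') (p : CProof Ax Γ (Δ ++ Δ')) :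
    CProof Ax Γ Δ' := by
  classical
  induction Δ with
  | nil => exact p
  | cons A Δ ih =>
    have hA : (Δ ++ Δ').Perm (A :: (Δ ++ Δ'.erase A)) :=
      ((List.perm_cons_erase (h List.mem_cons_self)).append_left Δ).trans List.perm_middle
    exact ih (List.subset_of_cons_subset h) ((p.permR (hA.cons A)).conR.permR hA.symm)

theorem mono {Γ Γ' Δ Δ'} (hΓ : Γ ⊆ Γ') (hΔ : Δ ⊆ Δ') (p : CProof Ax Γ Δ) :
    CProof Ax Γ' Δ' := by
  have q : CProof Ax (Γ ++ Γ') (Δ ++ Δ') :=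
    ((p.weakenL_append Γ').weakenR_append Δ').permL List.perm_append_comm |>.permR
      List.perm_append_comm
  exact contractR_append hΔ (contractL_append hΓ q)

theorem id_cons (A : CForm) {Γ Δ} : CProof Ax (A :: Γ) (A :: Δ) :=
  (CProof.id A).mono (by simp) (by simp)

theorem of_mem {A Γ Δ} (h : A ∈ Γ) : CProof Ax Γ (A :: Δ) :=
  (CProof.id A).mono (by simpa using h) (by simp)

theorem of_nil {A Γ Δ} (p : CProof Ax [] [A]) : CProof Ax Γ (A :: Δ) :=
  p.mono (by simp) (by simp)

theorem cut_same {Γ Δ A} (p : CProof Ax Γ (A :: Δ)) (q : CProof Ax (A :: Γ) Δ) :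
    CProof Ax Γ Δ :=
  (p.cut q).mono (by simp) (by simp)

theorem mp {Γ Δ A B} (pab : CProof Ax Γ (CForm.imp A B :: Δ)) (pa : CProof Ax Γ (A :: Δ)) :
    CProof Ax Γ (B :: Δ) :=
  cut_same (pab.mono (Δ' := _ :: B :: Δ) (List.Subset.refl _) (by simp))
    (impL (pa.mono (Δ' := A :: B :: Δ) (List.Subset.refl _) (by simp)) (id_cons B))

theorem and_left {Γ Δ A B} (p : CProof Ax Γ (CForm.and A B :: Δ)) : CProof Ax Γ (A :: Δ) :=
  cut_same (p.mono (Δ' := CForm.and A B :: A :: Δ) (List.Subset.refl _) (by simp))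
    (andL (id_cons A))

theorem and_right {Γ Δ A B} (p : CProof Ax Γ (CForm.and A B :: Δ)) : CProof Ax Γ (B :: Δ) :=
  cut_same (p.mono (Δ' := CForm.and A B :: B :: Δ) (List.Subset.refl _) (by simp))
    (andL ((id_cons B (Γ := Γ)).mono (Γ' := A :: B :: Γ) (by simp) (List.Subset.refl _)))

theorem spec {Γ Δ n σ A} (p : CProof Ax Γ (CForm.all n σ A :: Δ)) (t : Tm σ)
    (hff : CForm.FreeFor t n A) : CProof Ax Γ (A.substTm n t :: Δ) :=
  cut_same (p.mono (Δ' := _ :: A.substTm n t :: Δ) (List.Subset.refl _) (by simp))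
    (allL t hff (id_cons _))

theorem subst {A σ} (p : CProof Ax [] [A]) (n : ℕ) (t : Tm σ) (hff : CForm.FreeFor t n A) :
    CProof Ax [] [A.substTm n t] :=
  (p.allR (by simp) (by simp)).spec t hff

theorem epaAx {A : CForm} (h : EPAAx A) : CProof EPA [] [A] := .ax h

end CProof

@[simp] theorem LForm.neg_neg (A : LForm) : A.neg.neg = A := by
  induction A <;> simp_all [LForm.neg]

@[simp] theorem LForm.fvars_neg (A : LForm) : A.neg.fvars = A.fvars := by
  induction A <;> simp_all [LForm.neg, LForm.fvars]

@[simp] theorem CForm.fvars_emb (A : CForm) : A.emb.fvars = A.fvars := by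
  induction A <;> simp_all [CForm.emb, LForm.fvars, CForm.fvars]

theorem LForm.Nonlinear.neg {A : LForm} (h : A.Nonlinear) : A.neg.Nonlinear := by
  induction A <;> simp_all [LForm.neg, LForm.Nonlinear]

theorem LForm.NoDotTag.neg {A : LForm} (h : A.NoDotTag) : A.neg.NoDotTag := by
  induction A <;> simp_all [LForm.neg, LForm.NoDotTag]

theorem CForm.nonlinear_emb (A : CForm) : A.emb.Nonlinear := by
  induction A with
  | eq => trivial
  | not A ih => exact ih.neg
  | imp A B iha ihb => exact ⟨iha.neg, ihb⟩
  | and A B iha ihb | or A B iha ihb => exact ⟨iha, ihb⟩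
  | all n τ A ih | ex n τ A ih => exact ih

theorem CForm.noDotTag_emb (A : CForm) : A.emb.NoDotTag := by
  induction A with
  | eq => trivial
  | not A ih => exact ih.neg
  | imp A B iha ihb => exact ⟨iha.neg, ihb⟩
  | and A B iha ihb | or A B iha ihb => exact ⟨iha, ihb⟩
  | all n τ A ih | ex n τ A ih => exact ih

theorem LForm.FreeFor.neg {σ : Ty} {s : Tm σ} {n : ℕ} {A : LForm} (h : A.FreeFor s n) :
    A.neg.FreeFor s n := by
  induction A with
  | tensor A B iha ihb | par A B iha ihb | oplus A B iha ihb | withC A B iha ihb =>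
    exact ⟨iha h.1, ihb h.2⟩
  | bang A ih | quest A ih => exact ih h
  | all m τ A ih | ex m τ A ih =>
    rcases h with h | ⟨hm, h⟩
    · exact .inl (by simpa using h)
    · exact .inr ⟨hm, ih h⟩
  | _ => trivial

theorem CForm.FreeFor.emb {σ : Ty} {s : Tm σ} {n : ℕ} {A : CForm} (h : A.FreeFor s n) :
    A.emb.FreeFor s n := by
  induction A with
  | eq => trivial
  | not A ih => exact (ih h).neg
  | imp A B iha ihb => exact ⟨(iha h.1).neg, ihb h.2⟩
  | and A B iha ihb | or A B iha ihb => exact ⟨iha h.1, ihb h.2⟩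
  | all m τ A ih | ex m τ A ih =>
    rcases h with h | ⟨hm, h⟩
    · exact .inl (by simpa using h)
    · exact .inr ⟨hm, ih h⟩

theorem LForm.neg_substTm {σ : Ty} (s : Tm σ) (n : ℕ) (A : LForm) :
    (A.substTm n s).neg = A.neg.substTm n s := by
  induction A <;> simp_all [LForm.neg, LForm.substTm] <;> split <;> simp_all [LForm.neg]

theorem CForm.emb_substTm {σ : Ty} (s : Tm σ) (n : ℕ) (A : CForm) :
    (A.substTm n s).emb = A.emb.substTm n s := by
  induction A <;> simp_all [CForm.emb, CForm.substTm, LForm.substTm, LForm.neg_substTm] <;>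
    split <;> simp_all [CForm.emb]

namespace LProof

variable {affine eqc : Bool} {Ax : Set CForm}

/-- By `(!₂)` a nonlinear `?C` can be traded for `C`, which gives nonlinear formulas weakening
and contraction. -/
theorem of_quest {C : LForm} (hC : C.Nonlinear) (hC' : C.NoDotTag) {Γ : List LForm}
    (p : LProof affine eqc Ax (.quest C :: Γ)) : LProof affine eqc Ax (C :: Γ) := by
  have h := bang2 (affine := affine) (eqc := eqc) (Ax := Ax) hC.neg fun _ => hC'.neg
  rw [LForm.neg_neg] at h
  exact (p.cut (h.perm (.swap _ _ _))).perm (List.perm_append_singleton _ _)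

theorem weaken {C : LForm} (hC : C.Nonlinear) (hC' : C.NoDotTag) {Γ : List LForm}
    (p : LProof affine eqc Ax Γ) : LProof affine eqc Ax (C :: Γ) :=
  of_quest hC hC' (wkq C p)

theorem contract {C : LForm} (hC : C.Nonlinear) (hC' : C.NoDotTag) {Γ : List LForm}
    (p : LProof affine eqc Ax (C :: C :: Γ)) : LProof affine eqc Ax (C :: Γ) :=
  of_quest hC hC' (conq (der ((der p).perm (.swap _ _ _))))

theorem contract_append {Θ : List LForm} (hΘ : ∀ C ∈ Θ, C.Nonlinear ∧ C.NoDotTag)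
    {Γ : List LForm} (p : LProof affine eqc Ax (Θ ++ Θ ++ Γ)) :
    LProof affine eqc Ax (Θ ++ Γ) := by
  induction Θ generalizing Γ with
  | nil => simpa using p
  | cons C Θ ih =>
    have hC := hΘ C List.mem_cons_self
    have hperm : (C :: Θ ++ C :: Θ ++ Γ).Perm (C :: C :: (Θ ++ Θ ++ Γ)) := by simp
    have q := (contract hC.1 hC.2 (p.perm hperm)).perm
      (List.perm_middle (l₁ := Θ ++ Θ) (l₂ := Γ) (a := C)).symm
    simpa using (ih (fun D hD => hΘ D (List.mem_cons_of_mem _ hD)) q).perm List.perm_middle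

theorem tensor_same {Θ : List LForm} (hΘ : ∀ C ∈ Θ, C.Nonlinear ∧ C.NoDotTag) {A B : LForm}
    (p : LProof affine eqc Ax (A :: Θ)) (q : LProof affine eqc Ax (B :: Θ)) :
    LProof affine eqc Ax (A.tensor B :: Θ) := by
  have t := (p.tensor q).perm (List.perm_append_singleton _ _).symm
  exact (contract_append hΘ t).perm (List.perm_append_singleton _ _)

theorem cons_middle {Γ Δ : List LForm} {X : LForm}
    (p : LProof affine eqc Ax (X :: (Γ ++ Δ))) : LProof affine eqc Ax (Γ ++ X :: Δ) :=
  p.perm List.perm_middle.symm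

theorem of_cons_middle {Γ Δ : List LForm} {X : LForm}
    (p : LProof affine eqc Ax (Γ ++ X :: Δ)) : LProof affine eqc Ax (X :: (Γ ++ Δ)) :=
  p.perm List.perm_middle

theorem lp_app {ρ τ : Ty} {t : Tm (ρ ⤳ τ)} {Γ : List LForm}
    (p : LProof affine eqc Ax (.lp _ t :: Γ)) (r : Tm ρ) :
    LProof affine eqc Ax (.lp τ (t.app r) :: (Γ ++ [.nlp ρ r])) :=
  (p.cut (lpApp t r)).perm <| by
    have h := List.perm_append_singleton (LForm.lp τ (t.app r)) (Γ ++ [.nlp ρ r])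
    rwa [List.append_assoc] at h

end LProof

def embL (Γ : List CForm) : List LForm := Γ.map fun A => A.emb.neg

def embR (Δ : List CForm) : List LForm := Δ.map CForm.emb

theorem nonlinear_noDotTag_of_mem_embL_append_embR {Γ Δ : List CForm} :
    ∀ B ∈ embL Γ ++ embR Δ, B.Nonlinear ∧ B.NoDotTag := by
  simp only [embL, embR, List.mem_append, List.mem_map]
  rintro _ (⟨A, -, rfl⟩ | ⟨A, -, rfl⟩)
  · exact ⟨A.nonlinear_emb.neg, A.noDotTag_emb.neg⟩
  · exact ⟨A.nonlinear_emb, A.noDotTag_emb⟩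

theorem not_mem_fvars_of_mem_embL_append_embR {Γ Δ : List CForm} {x : ℕ × Ty}
    (hΓ : ∀ B ∈ Γ, x ∉ B.fvars) (hΔ : ∀ B ∈ Δ, x ∉ B.fvars) :
    ∀ B ∈ embL Γ ++ embR Δ, x ∉ B.fvars := by
  simp only [embL, embR, List.mem_append, List.mem_map]
  rintro _ (⟨A, hA, rfl⟩ | ⟨A, hA, rfl⟩)
  · simpa using hΓ A hA
  · simpa using hΔ A hA

theorem CProof.emb {affine eqc : Bool} {Ax : Set CForm} {Γ Δ : List CForm}
    (p : CProof Ax Γ Δ) : LProof affine eqc Ax (embL Γ ++ embR Δ) := by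
  induction p with
  | ax h => exact .fromAx h
  | id A => exact (LProof.id A.emb).perm (.swap _ _ _)
  | @cut Γ Δ Γ' Δ' A _ _ ihp ihq =>
    refine ((LProof.of_cons_middle (Γ := embL Γ) ihp).cut ihq).perm ?_
    simp only [embL, embR, List.map_append, List.append_eq, List.append_assoc]
    exact List.perm_append_comm_assoc _ _ _ |>.append_left _
  | permL _ h ih => exact ih.perm ((h.map _).append_right _)
  | permR _ h ih => exact ih.perm ((h.map _).append_left _)
  | wkL A _ ih => exact ih.weaken A.nonlinear_emb.neg A.noDotTag_emb.neg
  | wkR A _ ih => exact (ih.weaken A.nonlinear_emb A.noDotTag_emb).cons_middle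
  | @conL Γ Δ A _ ih => exact ih.contract A.nonlinear_emb.neg A.noDotTag_emb.neg
  | @conR Γ Δ A _ ih =>
    refine (LProof.contract A.nonlinear_emb A.noDotTag_emb ?_).cons_middle
    exact ih.of_cons_middle.perm (.cons _ List.perm_middle)
  | @notL Γ Δ A _ ih =>
    show LProof _ _ _ (A.emb.neg.neg :: _ ++ _)
    rw [LForm.neg_neg]
    exact ih.of_cons_middle
  | notR _ ih => exact ih.cons_middle
  | andL _ ih => exact ih.par
  | andR _ _ ihp ihq =>
    exact (LProof.tensor_same nonlinear_noDotTag_of_mem_embL_append_embR ihp.of_cons_middle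
      ihq.of_cons_middle).cons_middle
  | orL _ _ ihp ihq => exact LProof.tensor_same nonlinear_noDotTag_of_mem_embL_append_embR ihp ihq
  | orR _ ih => exact (ih.of_cons_middle.perm (.cons _ List.perm_middle)).par.cons_middle
  | @impL Γ Δ A B _ _ ihp ihq =>
    show LProof _ _ _ (LForm.tensor A.emb.neg.neg B.emb.neg :: _ ++ _)
    rw [LForm.neg_neg]
    exact LProof.tensor_same nonlinear_noDotTag_of_mem_embL_append_embR ihp.of_cons_middle ihq
  | impR _ ih => exact (ih.perm (.cons _ List.perm_middle)).par.cons_middle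
  | allL t hff _ ih =>
    refine .exR t hff.emb.neg ?_
    rw [← LForm.neg_substTm, ← CForm.emb_substTm]
    exact ih
  | allR hΓ hΔ _ ih =>
    exact (LProof.allR (not_mem_fvars_of_mem_embL_append_embR hΓ hΔ)
      ih.of_cons_middle).cons_middle
  | exL hΓ hΔ _ ih => exact .allR (not_mem_fvars_of_mem_embL_append_embR hΓ hΔ) ih
  | exR t hff _ ih =>
    refine (LProof.exR t hff.emb ?_).cons_middle
    rw [← CForm.emb_substTm]
    exact ih.of_cons_middle

section Arithmetic

variable {Γ Δ : List CForm}

theorem eq_refl (t : Tm 𝕆) : CProof EPA Γ (.eq t t :: Δ) :=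
  .of_nil ((CProof.epaAx (.eqRefl 0)).subst 0 t trivial)

/- The equality axioms are instantiated at variables `k, k + 1, …` lying above every variable of
the terms involved, so that the successive naive substitutions do not interfere. -/

theorem eq_symm {s t : Tm 𝕆} (p : CProof EPA Γ (.eq s t :: Δ)) :
    CProof EPA Γ (.eq t s :: Δ) := by
  set k := max s.maxVar t.maxVar
  have ax := ((CProof.epaAx (.eqSym k (k + 1))).subst k s ⟨trivial, trivial⟩).subst (k + 1) t
    ⟨trivial, trivial⟩
  simp only [CForm.substTm, Tm.subst_var_self, Tm.subst_var_of_ne (show k + 1 ≠ k by omega),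
    Tm.subst_of_maxVar_le (show s.maxVar ≤ k + 1 by omega)] at ax
  exact (CProof.of_nil ax).mp p

theorem eq_trans {s t r : Tm 𝕆} (p : CProof EPA Γ (.eq s t :: Δ))
    (q : CProof EPA Γ (.eq t r :: Δ)) : CProof EPA Γ (.eq s r :: Δ) := by
  set k := max (max s.maxVar t.maxVar) r.maxVar
  have ax := (((CProof.epaAx (.eqTrans k (k + 1) (k + 2))).subst k s
    ⟨⟨trivial, trivial⟩, trivial⟩).subst (k + 1) t ⟨⟨trivial, trivial⟩, trivial⟩).subst (k + 2) r
    ⟨⟨trivial, trivial⟩, trivial⟩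
  simp only [CForm.substTm, Tm.subst_var_self, Tm.subst_var_of_ne (show k + 1 ≠ k by omega),
    Tm.subst_var_of_ne (show k + 2 ≠ k by omega),
    Tm.subst_var_of_ne (show k + 2 ≠ k + 1 by omega),
    Tm.subst_of_maxVar_le (show s.maxVar ≤ k + 1 by omega),
    Tm.subst_of_maxVar_le (show s.maxVar ≤ k + 2 by omega),
    Tm.subst_of_maxVar_le (show t.maxVar ≤ k + 2 by omega)] at ax
  exact (CProof.of_nil ax).mp (p.andR q)

theorem eq_succ_congr {s t : Tm 𝕆} (p : CProof EPA Γ (.eq s t :: Δ)) :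
    CProof EPA Γ (.eq (Tm.succ.app s) (Tm.succ.app t) :: Δ) := by
  set k := max s.maxVar t.maxVar
  have ax := ((CProof.epaAx (.eqSub (.eq (Tm.succ.app (v0 k)) (Tm.succ.app (v0 (k + 2))))
    (k + 2) k (k + 1) trivial trivial)).subst k s ⟨trivial, trivial, trivial⟩).subst (k + 1) t
    ⟨trivial, trivial, trivial⟩
  simp only [CForm.substTm, Tm.subst_app, Tm.subst_succ, Tm.subst_var_self,
    Tm.subst_var_of_ne (show k + 1 ≠ k by omega), Tm.subst_var_of_ne (show k ≠ k + 2 by omega),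
    Tm.subst_of_maxVar_le (show s.maxVar ≤ k + 1 by omega)] at ax
  exact ((CProof.of_nil ax).mp p).mp (eq_refl _)

theorem beta {σ : Ty} (n : ℕ) (t : Tm 𝕆) (s : Tm σ) (h : s.FreeForIn n t) :
    CProof EPA Γ (.eq ((Tm.lam n σ t).app s) (t.subst n s) :: Δ) :=
  .of_nil (.epaAx (.axBeta n t s h))

theorem rec_succ (y : Tm 𝕆) (z : Tm (𝕆 ⤳ 𝕆 ⤳ 𝕆)) (n : Tm 𝕆) :
    CProof EPA Γ (.eq (recO y z (Tm.succ.app n)) ((z.app n).app (recO y z n)) :: Δ) :=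
  .of_nil (.epaAx (.axRS y z n))

theorem pred_succ_var : CProof EPA Γ (.eq (predT.app (Tm.succ.app (v0 3))) (v0 3) :: Δ) := by
  set z : Tm (𝕆 ⤳ 𝕆 ⤳ 𝕆) := .lam 1 𝕆 (.lam 2 𝕆 (v0 1))
  have hz : CProof EPA [] [.all 4 𝕆 (.eq ((z.app (v0 3)).app (v0 4))
      ((Tm.lam 2 𝕆 (v0 3)).app (v0 4)))] :=
    .epaAx (.axBeta 1 (.lam 2 𝕆 (v0 1)) (v0 3) (Tm.freeForIn_of_bv (by simp [Tm.bv, Tm.fvars])))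
  refine eq_trans (beta 0 (recO .zero z (v0 0)) _ (Tm.freeForIn_of_bv ?_)) ?_
  · simp [Tm.bv, recO, z, Tm.fvars]
  refine eq_trans (rec_succ _ _ _) (eq_trans (.of_nil (hz.spec (recO .zero z (v0 3)) trivial)) ?_)
  exact beta 2 (v0 3) _ trivial

theorem pred_succ (t : Tm 𝕆) : CProof EPA Γ (.eq (predT.app (Tm.succ.app t)) t :: Δ) :=
  .of_nil ((pred_succ_var (Γ := []) (Δ := [])).subst 3 t trivial)

theorem succ_pred (N : Tm 𝕆) :
    CProof EPA Γ ((neqF N .zero).imp (.eq N (Tm.succ.app (predT.app N))) :: Δ) := by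
  set A : CForm := (neqF (v0 3) .zero).imp (.eq (v0 3) (Tm.succ.app (predT.app (v0 3))))
  have base : CProof EPA [] [A.substTm 3 .zero] := .impR (.notL (eq_refl _))
  have step : CProof EPA [] [.all 3 𝕆 (A.imp (A.substTm 3 (Tm.succ.app (v0 3))))] :=
    .allR (by simp) (by simp) (.impR (.impR (eq_succ_congr (eq_symm (pred_succ _)))))
  have ind := (CProof.epaAx (.axInd A 3 ⟨trivial, trivial⟩)).mp (base.andR step)
  exact .of_nil (ind.spec N ⟨trivial, trivial⟩)

end Arithmetic

def witnessBody : Tm 𝕆 :=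
  predT.app ((Tm.var 0 Ty1).app (codeAt (.var 1 Ty1) (v0 3) ((Tm.var 2 Ty1).app (v0 3))))

def witnessFun₂ : Tm (Ty1 ⤳ Ty1) := .lam 2 Ty1 (.lam 3 𝕆 witnessBody)

def witnessFun₁ : Tm (Ty1 ⤳ Ty1 ⤳ Ty1) := .lam 1 Ty1 witnessFun₂

/-- `λx y V u. pred (x(⟨u⟩ * ȳ(V u)))`. Its first two binders reuse the indices of the variables
`x`, `y` it is applied to, so that the first two β-steps substitute a variable for itself. -/
def witnessFun : Tm (Ty1 ⤳ Ty1 ⤳ Ty1 ⤳ Ty1) := .lam 0 Ty1 witnessFun₁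

abbrev witnessTm : Tm Ty1 := ((witnessFun.app (.var 0 Ty1)).app (.var 1 Ty1)).app (.var 5 Ty1)

theorem fvars_witnessFun : witnessFun.fvars = ∅ := by
  ext ⟨n, τ⟩
  simp [witnessFun, witnessFun₁, witnessFun₂, witnessBody, predT, codeAt, seqCodeT, recO, pairT,
    addT, triT, Tm.fvars]
  tauto

theorem witnessTm_app {Γ Δ : List CForm} :
    CProof EPA Γ (.eq (witnessTm.app (v0 7))
      (predT.app ((Tm.var 0 Ty1).app (codeAt (.var 1 Ty1) (v0 7) ((Tm.var 5 Ty1).app (v0 7)))))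
      :: Δ) := by
  have ax₀ : CProof EPA [] [.all 5 Ty1 (.all 6 Ty1 (.all 7 𝕆
      (.eq ((((witnessFun.app (.var 0 Ty1)).app (.var 5 Ty1)).app (.var 6 Ty1)).app (v0 7))
        (((witnessFun₁.app (.var 5 Ty1)).app (.var 6 Ty1)).app (v0 7)))))] :=
    .epaAx (.axBeta 0 witnessFun₁ (.var 0 Ty1) (Tm.freeForIn_of_bv (by
      simp [Tm.bv, Tm.fvars, witnessFun₁, witnessFun₂, witnessBody, predT, codeAt, seqCodeT,
        recO, pairT, addT, triT])))
  have ax₁ : CProof EPA [] [.all 5 Ty1 (.all 6 𝕆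
      (.eq (((witnessFun₁.app (.var 1 Ty1)).app (.var 5 Ty1)).app (v0 6))
        ((witnessFun₂.app (.var 5 Ty1)).app (v0 6))))] :=
    .epaAx (.axBeta 1 witnessFun₂ (.var 1 Ty1) (Tm.freeForIn_of_bv (by
      simp [Tm.bv, Tm.fvars, witnessFun₂, witnessBody, predT, codeAt, seqCodeT, recO, pairT,
        addT, triT])))
  have ax₂ : CProof EPA [] [.all 6 𝕆 (.eq ((witnessFun₂.app (.var 5 Ty1)).app (v0 6))
      ((Tm.lam 3 𝕆 (witnessBody.subst 2 (.var 5 Ty1))).app (v0 6)))] :=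
    .epaAx (.axBeta 2 (.lam 3 𝕆 witnessBody) (.var 5 Ty1) (Tm.freeForIn_of_bv (by
      simp [Tm.bv, Tm.fvars, witnessBody, predT, codeAt, seqCodeT, recO, pairT, addT, triT])))
  have e₀ : CProof EPA [] [.eq (witnessTm.app (v0 7))
      (((witnessFun₁.app (.var 1 Ty1)).app (.var 5 Ty1)).app (v0 7))] :=
    ((ax₀.spec (.var 1 Ty1) (CForm.freeFor_of_disjoint (by simp [CForm.bv, Tm.fvars]))).spec
      (.var 5 Ty1) (CForm.freeFor_of_disjoint (by simp [CForm.substTm, CForm.bv, Tm.fvars]))).spec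
      (v0 7) trivial
  have e₁ : CProof EPA [] [.eq (((witnessFun₁.app (.var 1 Ty1)).app (.var 5 Ty1)).app (v0 7))
      ((witnessFun₂.app (.var 5 Ty1)).app (v0 7))] :=
    (ax₁.spec (.var 5 Ty1) (CForm.freeFor_of_disjoint (by simp [CForm.bv, Tm.fvars]))).spec
      (v0 7) trivial
  have e₂ : CProof EPA [] [.eq ((witnessFun₂.app (.var 5 Ty1)).app (v0 7))
      ((Tm.lam 3 𝕆 (predT.app ((Tm.var 0 Ty1).app
        (codeAt (.var 1 Ty1) (v0 3) ((Tm.var 5 Ty1).app (v0 3)))))).app (v0 7))] :=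
    ax₂.spec (v0 7) trivial
  refine eq_trans (.of_nil e₀) (eq_trans (.of_nil e₁)
    (eq_trans (.of_nil e₂) (beta 3 _ _ (Tm.freeForIn_of_bv ?_))))
  simp [Tm.bv, Tm.fvars, predT, codeAt, seqCodeT, recO, pairT, addT, triT]

section Wit

variable {tch : Tm (Ty1 ⤳ Ty1 ⤳ 𝕆 ⤳ 𝕆 ⤳ 𝕆)}

theorem chSpec_mp (htc : tch.Closed) (hspec : CProof EPA [] [chSpec tch]) {Γ Δ : List CForm}
    (p : CProof EPA Γ
      (aAt tch (.var 0 Ty1) (.var 1 Ty1) (v0 7) ((Tm.var 5 Ty1).app (v0 7)) :: Δ)) :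
    CProof EPA Γ (((neqF ((Tm.var 0 Ty1).app
          (codeAt (.var 1 Ty1) (v0 7) ((Tm.var 5 Ty1).app (v0 7)))) .zero).and
        (.all 4 𝕆 ((CForm.ex 5 𝕆
            (.eq ((addT.app (v0 4)).app (Tm.succ.app (v0 5))) ((Tm.var 5 Ty1).app (v0 7)))).imp
          (.eq ((Tm.var 0 Ty1).app (codeAt (.var 1 Ty1) (v0 7) (v0 4))) .zero)))) :: Δ) := by
  have h := (((hspec.spec (.var 0 Ty1) (CForm.freeFor_of_disjoint ?_)).spec (.var 1 Ty1)
    (CForm.freeFor_of_disjoint ?_)).spec (v0 7) (CForm.freeFor_of_disjoint ?_)).spec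
    ((Tm.var 5 Ty1).app (v0 7)) (CForm.freeFor_of_disjoint ?_)
  · simp [iffC, aAt, neqF, ltF, codeAt, CForm.substTm, Tm.maxVar, Tm.subst_var_of_ne,
      Tm.subst_of_closed htc, Tm.subst_of_closed fvars_seqCodeT,
      Tm.subst_of_closed fvars_addT] at h
    exact (CProof.of_nil h.and_left).mp p
  all_goals simp [CForm.bv, CForm.substTm, iffC, aAt, neqF, ltF, codeAt, Tm.maxVar, Tm.fvars]

theorem wit_of_forall_aAt (htc : tch.Closed) (hspec : CProof EPA [] [chSpec tch]) :
    CProof EPA [.all 2 𝕆 (aAt tch (.var 0 Ty1) (.var 1 Ty1) (v0 2) ((Tm.var 5 Ty1).app (v0 2)))]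
      [(witF (.var 0 Ty1) (.var 1 Ty1) (.var 6 Ty1)).substTm 6 witnessTm] := by
  have hfc : tch.fvars = ∅ := htc
  set A := aAt tch (.var 0 Ty1) (.var 1 Ty1) (v0 7) ((Tm.var 5 Ty1).app (v0 7))
  have hA : (aAt tch (.var 0 Ty1) (.var 1 Ty1) (v0 2) ((Tm.var 5 Ty1).app (v0 2))).substTm 2
      (v0 7) = A := by
    simp [A, aAt, CForm.substTm, Tm.subst_of_closed htc, Tm.subst_var_of_ne]
  -- `witF` binds `u, v, w` and the witness of `w < v` as the variables `7, 8, 9, 10`.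
  show CProof EPA _ [.all 7 𝕆 (.ex 8 𝕆 ((CForm.eq ((Tm.var 0 Ty1).app
      (codeAt (.var 1 Ty1) (v0 7) (v0 8))) (Tm.succ.app (witnessTm.app (v0 7)))).and
    (.all 9 𝕆 ((CForm.ex 10 𝕆 (.eq ((addT.app (v0 9)).app (Tm.succ.app (v0 10))) (v0 8))).imp
      (.eq ((Tm.var 0 Ty1).app (codeAt (.var 1 Ty1) (v0 7) (v0 9))) .zero)))))]
  refine .allR (by simp [CForm.fvars, aAt, Tm.fvars, hfc]) (by simp) (.allL (v0 7) trivial ?_)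
  rw [hA]
  refine .exR ((Tm.var 5 Ty1).app (v0 7)) (CForm.freeFor_of_disjoint (by simp [CForm.bv, Tm.fvars]))
    (.andR ?_ (.allR ?_ (by simp) (.impR (.exL ?_ ?_ ?_))))
  · have hN := chSpec_mp htc hspec (CProof.id_cons A (Γ := []) (Δ := []))
    exact eq_trans ((succ_pred _).mp hN.and_left) (eq_symm (eq_succ_congr witnessTm_app))
  · simp [CForm.fvars, A, aAt, Tm.fvars, hfc]
  · simp [CForm.fvars, A, aAt, Tm.fvars, hfc]
  · simp [CForm.substTm, CForm.fvars, codeAt, Tm.fvars, Tm.subst_var_of_ne,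
      Tm.subst_of_closed fvars_seqCodeT, fvars_seqCodeT]
  · refine ((chSpec_mp htc hspec (CProof.of_mem ?_)).and_right.spec (v0 9)
      (CForm.freeFor_of_disjoint (by simp [CForm.bv, Tm.fvars]))).mp
      (.exR (v0 10) trivial (CProof.id_cons _))
    exact List.mem_cons_of_mem _ List.mem_cons_self

end Wit

theorem lp_witnessTm {affine eqc : Bool} {Ax : Set CForm} :
    LProof affine eqc Ax [.lp Ty1 witnessTm, .nlp Ty1 (.var 0 Ty1), .nlp Ty1 (.var 1 Ty1),
      .nlp Ty1 (.var 5 Ty1)] :=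
  (((LProof.lpAx _ fvars_witnessFun).lp_app _).lp_app _).lp_app _

theorem Aat_witness_yields_linear_wit
    (tch : Tm (Ty1 ⤳ Ty1 ⤳ 𝕆 ⤳ 𝕆 ⤳ 𝕆)) (htc : tch.Closed)
    (hspec : CProof EPA [] [chSpec tch]) :
    LProof false false EPA
      [.nlp Ty1 (.var 0 Ty1), .nlp Ty1 (.var 1 Ty1),
        (exLp 5 Ty1 ((CForm.all 2 𝕆
          (aAt tch (.var 0 Ty1) (.var 1 Ty1) (v0 2)
            ((Tm.var 5 Ty1).app (v0 2)))).emb)).neg,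
        exLp 6 Ty1 ((witF (Tm.var 0 Ty1) (Tm.var 1 Ty1) (Tm.var 6 Ty1)).emb)] := by
  set H := CForm.all 2 𝕆 (aAt tch (.var 0 Ty1) (.var 1 Ty1) (v0 2) ((Tm.var 5 Ty1).app (v0 2)))
  set W := witF (Tm.var 0 Ty1) (Tm.var 1 Ty1) (Tm.var 6 Ty1)
  have wit := (wit_of_forall_aAt htc hspec).emb (affine := false) (eqc := false)
  simp only [embL, embR, List.map_cons, List.map_nil, List.cons_append, List.nil_append,
    CForm.emb_substTm] at wit
  have hex : LProof false false EPA (exLp 6 Ty1 W.emb ::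
      [.nlp Ty1 (.var 0 Ty1), .nlp Ty1 (.var 1 Ty1), .nlp Ty1 (.var 5 Ty1), H.emb.neg]) :=
    .exR witnessTm ⟨trivial, (CForm.freeFor_of_disjoint
        (by simp [W, witF, CForm.bv, ltF, Tm.fvars, Tm.maxVar, fvars_witnessFun])).emb⟩
      (lp_witnessTm.tensor (wit.perm (.swap _ _ _)))
  have hall : LProof false false EPA
      ((exLp 5 Ty1 H.emb).neg ::
        [exLp 6 Ty1 W.emb, .nlp Ty1 (.var 0 Ty1), .nlp Ty1 (.var 1 Ty1)]) :=
    .allR (by simp [exLp, W, witF, LForm.fvars, CForm.fvars, Tm.fvars, ltF, fvars_seqCodeT,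
        fvars_addT])
      (.par (hex.perm (List.perm_append_comm (l₁ := [_, _, _]) (l₂ := [_, _]))))
  exact hall.perm (List.perm_append_comm (l₁ := [_, _]) (l₂ := [_, _]))

end WR
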